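/- For m ∈ ℤ fixed, the stiffness matrix entries A(m)_{n'n} = (1/π)∫₀^{2π}∫₀¹ conj(∇_H ζ_{mn'}) · ∇_H ζ_{mn} ρ dρ dθ are given by A(m)_{n'n} = 2 μ_{mn'} μ_{mn} [2γ(γ + |m| + 1) + |m|], where γ = min(n', n). -/

import Mathlib

/-!
Write `k = |m|`. Expanding `P_n^{(0,k)}(2x-1) = ∑ₛ cₛ xˢ` with
`cₛ = (-1)^(n-s) C(n,s) C(k+n+s,n)`, the radial factor is `∑ₛ cₛ ρ^(k+2s)`. The angular factors
`e^{imθ}` cancel against their conjugates, and the monomials `ρ^a`, `ρ^b` contribute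
`(ab + k²)/(a + b)` to the radial integral, which for `a = k+2s`, `b = k+2t` is
`k + 2st/(k+s+t)`. So the entry is `2 μ μ' (k (∑ cₛ)(∑ c'ₜ) + 2 ∑ₛ ∑ₜ cₛ c'ₜ st/(k+s+t))`.
Here `∑ cₛ = 1` is the value at `x = 1`, `∑ cₛ s = n(n+k+1)` the derivative there, and for
`1 ≤ s ≤ q` the inner sum `∑ₜ c'ₜ t/(k+s+t)` over the coefficients of degree `q` equals `1`:
up to the factor `q!` it is the `q`-th forward difference of the monic polynomial
`t (t+k+1) ⋯ (t+k+q) / (t+k+s)` of degree `q`. Summing over `s ≤ p ≤ q` gives `p(p+k+1)`.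
-/

open Complex

/-- The Jacobi polynomial P_n^{(0,k)} given by its standard explicit formula. -/
noncomputable def jacobiP (n k : ℕ) (x : ℝ) : ℝ :=
  ∑ s ∈ Finset.range (n + 1),
    (n.choose (n - s) : ℝ) * ((n + k).choose s : ℝ)
      * ((x - 1) / 2) ^ s * ((x + 1) / 2) ^ (n - s)

/-- The Zernike polynomial ζ_{mn}(ρ,θ) = μ_{mn} P_n^{(0,|m|)}(2ρ²−1) ρ^{|m|} e^{imθ}. -/
noncomputable def zernike (m : ℤ) (n : ℕ) (ρ θ : ℝ) : ℂ :=
  (Real.sqrt (1 + m.natAbs + 2 * n) : ℂ) * (jacobiP n m.natAbs (2 * ρ ^ 2 - 1) : ℂ)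
    * (ρ : ℂ) ^ m.natAbs * Complex.exp (Complex.I * m * θ)

open Finset Polynomial

theorem Polynomial.Monic.sum_range_alternating_mul_eval {R : Type*} [CommRing R] {P : R[X]}
    (hP : P.Monic) :
    ∑ t ∈ range (P.natDegree + 1),
        (-1 : R) ^ (P.natDegree - t) * P.natDegree.choose t * P.eval (t : R)
      = P.natDegree.factorial := by
  have h := congr_fun P.fwdDiff_iter_degree_eq_factorial 0
  rw [fwdDiff_iter_eq_sum_shift] at h
  simpa [hP.leadingCoeff, zsmul_eq_mul] using h

noncomputable def jacobiCoeff (n k s : ℕ) : ℝ :=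
  (-1) ^ (n - s) * n.choose s * (k + n + s).choose n

theorem factorial_mul_choose_eq_prod_range (n a : ℕ) :
    (n.factorial * (a + n).choose n : ℝ) = ∏ i ∈ range n, ((a : ℝ) + 1 + i) := by
  rw [← Nat.cast_mul, ← Nat.ascFactorial_eq_factorial_mul_choose, Nat.ascFactorial_eq_prod_range]
  push_cast; rfl

theorem Nat.choose_mul_choose_eq_choose_mul_choose_sub {n s d : ℕ} (hs : s ≤ n) :
    n.choose s * s.choose d = n.choose d * (n - d).choose (n - s) := by
  rcases lt_or_ge s d with hsd | hds
  · rw [Nat.choose_eq_zero_of_lt hsd, mul_zero, eq_comm, mul_eq_zero]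
    rcases le_or_gt d n with hdn | hnd
    · exact .inr (Nat.choose_eq_zero_of_lt (by omega))
    · exact .inl (Nat.choose_eq_zero_of_lt hnd)
  · rw [Nat.choose_mul hds, ← Nat.choose_symm (by omega : s - d ≤ n - d)]
    congr 2
    omega

theorem Nat.sum_choose_mul_choose_mul_choose (n k d : ℕ) :
    ∑ s ∈ range (n + 1), n.choose s * (n + k).choose s * s.choose d
      = n.choose d * (n + k + (n - d)).choose n := by
  rw [Nat.add_choose_eq, Nat.sum_antidiagonal_eq_sum_range_succ_mk, mul_sum]
  refine sum_congr rfl fun s hs => ?_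
  rw [mul_right_comm,
    Nat.choose_mul_choose_eq_choose_mul_choose_sub (by simpa [Nat.lt_succ_iff] using hs)]
  ring

theorem jacobiP_two_mul_sub_one_eq_sum (n k : ℕ) (x : ℝ) :
    jacobiP n k (2 * x - 1)
      = ∑ s ∈ range (n + 1), (n.choose s : ℝ) * (n + k).choose s * ((x - 1) ^ s * x ^ (n - s)) := by
  refine sum_congr rfl fun s hs => ?_
  rw [Nat.choose_symm (by simpa [Nat.lt_succ_iff] using hs)]
  ring_nf

theorem sub_one_pow_mul_pow_eq_sum (x : ℝ) {s n : ℕ} (hs : s ≤ n) :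
    (x - 1) ^ s * x ^ (n - s)
      = ∑ r ∈ range (n + 1), (-1) ^ (n - r) * (s.choose (n - r) : ℝ) * x ^ r := by
  have hsub : range (s + 1) ⊆ range (n + 1) := range_subset_range.mpr (by omega)
  rw [← sum_range_reflect, sub_eq_neg_add, add_pow, sum_mul,
    sum_subset hsub fun d _ hd => by simp [Nat.choose_eq_zero_of_lt (by simpa using hd : s < d)]]
  refine sum_congr rfl fun d hd => ?_
  have hdn : d ≤ n := by simpa [Nat.lt_succ_iff] using hd
  rw [show n + 1 - 1 - d = n - d by omega, show n - (n - d) = d by omega]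
  rcases le_or_gt d s with hds | hsd
  · rw [← show x ^ (s - d) * x ^ (n - s) = x ^ (n - d) by rw [← pow_add]; congr 1; omega]
    ring
  · simp [Nat.choose_eq_zero_of_lt hsd]

theorem jacobiP_two_mul_sub_one (n k : ℕ) (x : ℝ) :
    jacobiP n k (2 * x - 1) = ∑ r ∈ range (n + 1), jacobiCoeff n k r * x ^ r := by
  rw [jacobiP_two_mul_sub_one_eq_sum]
  calc _ = ∑ s ∈ range (n + 1), ∑ r ∈ range (n + 1),
        (-1) ^ (n - r) * ((n.choose s * (n + k).choose s * s.choose (n - r) : ℕ) : ℝ) * x ^ r := by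
        refine sum_congr rfl fun s hs => ?_
        rw [sub_one_pow_mul_pow_eq_sum x (by simpa [Nat.lt_succ_iff] using hs), mul_sum]
        push_cast
        exact sum_congr rfl fun r _ => by ring
    _ = _ := by
        rw [sum_comm]
        refine sum_congr rfl fun r hr => ?_
        have hrn : r ≤ n := by simpa [Nat.lt_succ_iff] using hr
        rw [← sum_mul, ← mul_sum, ← Nat.cast_sum, Nat.sum_choose_mul_choose_mul_choose,
          Nat.choose_symm_of_eq_add (by omega : n = n - r + r), jacobiCoeff,
          show n + k + (n - (n - r)) = k + n + r by omega]
        push_cast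
        ring

theorem sum_jacobiCoeff (n k : ℕ) : ∑ s ∈ range (n + 1), jacobiCoeff n k s = 1 := by
  have h := (jacobiP_two_mul_sub_one n k 1).symm.trans (jacobiP_two_mul_sub_one_eq_sum n k 1)
  simpa [sum_range_succ'] using h

theorem sum_jacobiCoeff_mul (n k : ℕ) :
    ∑ s ∈ range (n + 1), jacobiCoeff n k s * s = n * (n + k + 1) := by
  have hmono := HasDerivAt.fun_sum (u := range (n + 1))
    fun r _ => (hasDerivAt_pow r (1 : ℝ)).const_mul (jacobiCoeff n k r)
  have hprod := HasDerivAt.fun_sum (u := range (n + 1)) fun s _ =>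
    ((((hasDerivAt_id' (1 : ℝ)).sub_const 1).fun_pow s).fun_mul
      (hasDerivAt_pow (n - s) 1)).const_mul ((n.choose s : ℝ) * (n + k).choose s)
  simp_rw [← jacobiP_two_mul_sub_one, jacobiP_two_mul_sub_one_eq_sum] at hmono
  have h := hprod.unique hmono
  rcases n with _ | n
  · simp
  simp only [sub_self, mul_one, one_pow, sum_range_succ', Nat.cast_add, Nat.cast_one,
    add_tsub_cancel_right, ne_eq, Nat.add_eq_zero_iff, one_ne_zero, and_false, not_false_eq_true,
    zero_pow, Nat.reduceSubDiff, zero_mul, add_zero, mul_zero, sum_const_zero, zero_add,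
    Nat.choose_one_right, CharP.cast_eq_zero, pow_zero, Nat.choose_zero_right, zero_tsub, tsub_zero,
    one_mul] at h ⊢
  linarith

theorem sum_jacobiCoeff_mul_div {n k s : ℕ} (hs : s ∈ Icc 1 n) :
    ∑ t ∈ range (n + 1), jacobiCoeff n k t * (t / (k + s + t)) = 1 := by
  obtain ⟨hs1, hsn⟩ := mem_Icc.mp hs
  have hmem : s - 1 ∈ range n := mem_range.mpr (by omega)
  set P : ℝ[X] := X * ∏ i ∈ (range n).erase (s - 1), (X + C ((k + 1 + i : ℕ) : ℝ))
  have hmonic : ∀ i ∈ (range n).erase (s - 1), (X + C ((k + 1 + i : ℕ) : ℝ)).Monic :=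
    fun i _ => monic_X_add_C _
  have hP : P.Monic := monic_X.mul (monic_prod_of_monic _ _ hmonic)
  have hdeg : P.natDegree = n := by
    rw [monic_X.natDegree_mul (monic_prod_of_monic _ _ hmonic), natDegree_X,
      natDegree_prod_of_monic _ _ hmonic]
    simp only [natDegree_X_add_C, sum_const, card_erase_of_mem hmem, card_range, smul_eq_mul,
      mul_one]
    omega
  have hPt (t : ℕ) : ((k : ℝ) + s + t) * P.eval (t : ℝ)
      = t * (n.factorial * (k + n + t).choose n) := by
    have hfull : ∏ i ∈ range n, ((t : ℝ) + ((k + 1 + i : ℕ) : ℝ))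
        = n.factorial * (k + n + t).choose n := by
      rw [show k + n + t = t + k + n by omega, factorial_mul_choose_eq_prod_range]
      exact prod_congr rfl fun i _ => by push_cast; ring
    rw [← hfull, ← mul_prod_erase _ _ hmem]
    simp only [P, eval_mul, eval_X, eval_prod, eval_add, eval_C]
    rw [show k + 1 + (s - 1) = k + s by omega]
    push_cast; ring
  have heval (t : ℕ) : jacobiCoeff n k t * (t / (k + s + t))
      = (-1) ^ (n - t) * n.choose t * P.eval (t : ℝ) / n.factorial := by
    have hks : (k : ℝ) + s + t ≠ 0 := by positivity
    rw [eq_div_iff (by positivity), ← mul_right_inj' hks, mul_left_comm _ _ (P.eval _), hPt t,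
      jacobiCoeff]
    field_simp
  simp_rw [heval, ← sum_div, ← hdeg, hP.sum_range_alternating_mul_eval]
  exact div_self (by positivity)

theorem sum_sum_jacobiCoeff_mul_div_of_le (k : ℕ) {p q : ℕ} (hpq : p ≤ q) :
    ∑ s ∈ range (p + 1), ∑ t ∈ range (q + 1),
      jacobiCoeff p k s * jacobiCoeff q k t * (s * t / (k + s + t)) = p * (p + k + 1) := by
  rw [← sum_jacobiCoeff_mul]
  refine sum_congr rfl fun s hs => ?_
  rcases Nat.eq_zero_or_pos s with rfl | hs0
  · simp
  have hsq : s ∈ Icc 1 q := mem_Icc.mpr ⟨hs0, by simp at hs; omega⟩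
  rw [← mul_one (_ * _), ← sum_jacobiCoeff_mul_div (k := k) hsq, mul_sum]
  exact sum_congr rfl fun t _ => by ring

theorem sum_sum_jacobiCoeff_mul_div (k p q : ℕ) :
    ∑ s ∈ range (p + 1), ∑ t ∈ range (q + 1),
      jacobiCoeff p k s * jacobiCoeff q k t * (s * t / (k + s + t))
      = (min p q : ℕ) * ((min p q : ℕ) + k + 1) := by
  rcases le_total p q with h | h
  · rw [min_eq_left h, sum_sum_jacobiCoeff_mul_div_of_le k h]
  · rw [min_eq_right h, ← sum_sum_jacobiCoeff_mul_div_of_le k h, sum_comm]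
    exact sum_congr rfl fun t _ => sum_congr rfl fun s _ => by ring_nf

theorem monomial_stiffness_coeff_eq (k s t : ℕ) :
    (((k + 2 * s : ℕ) : ℝ) * (k + 2 * t : ℕ) + k ^ 2) / ((k + 2 * s : ℕ) + (k + 2 * t : ℕ))
      = k + 2 * (s * t / (k + s + t)) := by
  push_cast
  rcases eq_or_ne ((k : ℝ) + s + t) 0 with h | h
  · obtain ⟨rfl, rfl, rfl⟩ : k = 0 ∧ s = 0 ∧ t = 0 := by
      have : k + s + t = 0 := by exact_mod_cast h
      omega
    simp
  · rw [show (k : ℝ) + 2 * s + (k + 2 * t) = 2 * (k + s + t) by ring]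
    field_simp
    ring

theorem sum_sum_jacobiCoeff_stiffness (k p q : ℕ) :
    ∑ s ∈ range (p + 1), ∑ t ∈ range (q + 1), jacobiCoeff p k s * jacobiCoeff q k t *
      ((((k + 2 * s : ℕ) : ℝ) * (k + 2 * t : ℕ) + k ^ 2) / ((k + 2 * s : ℕ) + (k + 2 * t : ℕ)))
      = 2 * (min p q : ℕ) * ((min p q : ℕ) + k + 1) + k := by
  simp_rw [monomial_stiffness_coeff_eq, mul_add, sum_add_distrib, ← sum_mul, ← mul_sum, ← sum_mul,
    sum_jacobiCoeff, mul_left_comm _ (2 : ℝ), ← mul_sum, sum_sum_jacobiCoeff_mul_div]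
  ring

noncomputable def zernikeRadial (n k : ℕ) (ρ : ℝ) : ℝ :=
  jacobiP n k (2 * ρ ^ 2 - 1) * ρ ^ k

theorem zernikeRadial_eq_sum (n k : ℕ) (ρ : ℝ) :
    zernikeRadial n k ρ = ∑ s ∈ range (n + 1), jacobiCoeff n k s * ρ ^ (k + 2 * s) := by
  rw [zernikeRadial, jacobiP_two_mul_sub_one, sum_mul]
  exact sum_congr rfl fun s _ => by ring

theorem hasDerivAt_zernikeRadial (n k : ℕ) (ρ : ℝ) :
    HasDerivAt (zernikeRadial n k)
      (∑ s ∈ range (n + 1), jacobiCoeff n k s * ((k + 2 * s : ℕ) * ρ ^ (k + 2 * s - 1))) ρ := by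
  rw [funext (zernikeRadial_eq_sum n k)]
  exact HasDerivAt.fun_sum fun s _ => (hasDerivAt_pow _ ρ).const_mul _

theorem zernike_eq_zernikeRadial (m : ℤ) (n : ℕ) (ρ θ : ℝ) :
    zernike m n ρ θ = ((√(1 + m.natAbs + 2 * n) * zernikeRadial n m.natAbs ρ : ℝ) : ℂ)
      * exp (I * m * θ) := by
  rw [zernike, zernikeRadial]
  push_cast
  ring

theorem deriv_zernike_radius (m : ℤ) (n : ℕ) (θ ρ : ℝ) :
    deriv (fun r => zernike m n r θ) ρ
      = ((√(1 + m.natAbs + 2 * n) * deriv (zernikeRadial n m.natAbs) ρ : ℝ) : ℂ)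
        * exp (I * m * θ) := by
  simp_rw [zernike_eq_zernikeRadial]
  exact ((((hasDerivAt_zernikeRadial n m.natAbs ρ).differentiableAt.hasDerivAt.const_mul
    _).ofReal_comp).mul_const _).deriv

theorem deriv_zernike_angle (m : ℤ) (n : ℕ) (ρ θ : ℝ) :
    deriv (fun t => zernike m n ρ t) θ
      = ((√(1 + m.natAbs + 2 * n) * zernikeRadial n m.natAbs ρ : ℝ) : ℂ)
        * (I * m) * exp (I * m * θ) := by
  simp_rw [zernike_eq_zernikeRadial]
  have h := (((hasDerivAt_id (θ : ℂ)).const_mul (I * m)).cexp.comp_ofReal).const_mul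
    ((√(1 + m.natAbs + 2 * n) * zernikeRadial n m.natAbs ρ : ℝ) : ℂ)
  simp only [id, mul_one] at h
  rw [h.deriv]
  ring

theorem conj_exp_I_mul_mul_exp_I_mul (m : ℤ) (θ : ℝ) :
    (starRingEnd ℂ) (exp (I * m * θ)) * exp (I * m * θ) = 1 := by
  rw [conj_mul', show I * m * θ = ((m * θ : ℝ) : ℂ) * I by push_cast; ring,
    norm_exp_ofReal_mul_I]
  simp

theorem conj_mul_add_inv_sq_mul_conj_mul {E : ℂ} (hE : (starRingEnd ℂ) E * E = 1)
    (m : ℤ) (a b c d ρ : ℝ) :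
    ((starRingEnd ℂ) (a * E) * (b * E)
      + ((ρ : ℂ)⁻¹) ^ 2 * (starRingEnd ℂ) (c * (I * m) * E) * (d * (I * m) * E)) * ρ
    = (((a * b + ρ⁻¹ ^ 2 * m.natAbs ^ 2 * (c * d)) * ρ : ℝ) : ℂ) := by
  have hm : (m : ℂ) ^ 2 = (m.natAbs : ℂ) ^ 2 := by
    rw [← Int.cast_natCast, ← Int.cast_pow, ← Int.cast_pow, Int.natAbs_sq]
  simp only [map_mul, conj_ofReal, conj_I, map_intCast]
  push_cast
  linear_combination (a * b * ρ - (ρ : ℂ)⁻¹ ^ 2 * c * d * ρ * I ^ 2 * m ^ 2) * hE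
    - ((ρ : ℂ)⁻¹ ^ 2 * c * d * ρ * m ^ 2) * I_sq + ((ρ : ℂ)⁻¹ ^ 2 * c * d * ρ) * hm

theorem zernike_stiffness_integrand_eq (m : ℤ) (n' n : ℕ) (θ ρ : ℝ) :
    ((starRingEnd ℂ) (deriv (fun r => zernike m n' r θ) ρ)
        * deriv (fun r => zernike m n r θ) ρ
      + ((ρ : ℂ)⁻¹) ^ 2 * (starRingEnd ℂ) (deriv (fun t => zernike m n' ρ t) θ)
        * deriv (fun t => zernike m n ρ t) θ) * (ρ : ℂ)
    = ((√(1 + m.natAbs + 2 * n') * √(1 + m.natAbs + 2 * n) *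
        ((deriv (zernikeRadial n' m.natAbs) ρ * deriv (zernikeRadial n m.natAbs) ρ
          + ρ⁻¹ ^ 2 * m.natAbs ^ 2 * (zernikeRadial n' m.natAbs ρ * zernikeRadial n m.natAbs ρ))
          * ρ) : ℝ) : ℂ) := by
  rw [deriv_zernike_radius, deriv_zernike_radius, deriv_zernike_angle, deriv_zernike_angle,
    conj_mul_add_inv_sq_mul_conj_mul (conj_exp_I_mul_mul_exp_I_mul m θ)]
  congr 1
  ring

theorem monomial_stiffness_integrand {ρ : ℝ} (hρ : ρ ≠ 0) {k a b : ℕ} (hka : k ≤ a) :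
    (a * ρ ^ (a - 1)) * (b * ρ ^ (b - 1)) * ρ + ρ⁻¹ ^ 2 * k ^ 2 * (ρ ^ a * ρ ^ b) * ρ
      = (a * b + k ^ 2) * ρ ^ (a + b - 1) := by
  rcases a with _ | a
  · obtain rfl : k = 0 := by omega
    simp
  rcases b with _ | b
  · simp only [Nat.add_sub_cancel, Nat.add_zero]
    field_simp
    ring
  · simp only [Nat.add_sub_cancel, show a + 1 + (b + 1) - 1 = a + b + 1 by omega]
    field_simp
    ring

theorem integral_mul_pow_sub_one (c : ℝ) {N : ℕ} (hc : N = 0 → c = 0) :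
    ∫ ρ in (0 : ℝ)..1, c * ρ ^ (N - 1) = c / N := by
  rcases N with _ | N
  · simp [hc rfl]
  · simp [integral_pow, div_eq_mul_inv]

theorem integral_zernikeRadial_stiffness (k p q : ℕ) :
    ∫ ρ in (0 : ℝ)..1, (deriv (zernikeRadial p k) ρ * deriv (zernikeRadial q k) ρ
        + ρ⁻¹ ^ 2 * k ^ 2 * (zernikeRadial p k ρ * zernikeRadial q k ρ)) * ρ
      = 2 * (min p q : ℕ) * ((min p q : ℕ) + k + 1) + k := by
  have hexpand : ∀ ρ ∈ Set.uIoc (0 : ℝ) 1,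
      (deriv (zernikeRadial p k) ρ * deriv (zernikeRadial q k) ρ
        + ρ⁻¹ ^ 2 * k ^ 2 * (zernikeRadial p k ρ * zernikeRadial q k ρ)) * ρ
      = ∑ s ∈ range (p + 1), ∑ t ∈ range (q + 1), jacobiCoeff p k s * jacobiCoeff q k t *
          ((((k + 2 * s : ℕ) : ℝ) * (k + 2 * t : ℕ) + k ^ 2)
            * ρ ^ (k + 2 * s + (k + 2 * t) - 1)) := by
    intro ρ hρ
    have hρ0 : ρ ≠ 0 := by
      rw [Set.uIoc_of_le zero_le_one] at hρ
      exact hρ.1.ne'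
    rw [(hasDerivAt_zernikeRadial p k ρ).deriv, (hasDerivAt_zernikeRadial q k ρ).deriv,
      zernikeRadial_eq_sum, zernikeRadial_eq_sum, sum_mul_sum, sum_mul_sum]
    simp only [mul_sum, sum_mul, ← sum_add_distrib]
    refine sum_congr rfl fun s _ => sum_congr rfl fun t _ => ?_
    rw [← monomial_stiffness_integrand hρ0 (by omega : k ≤ k + 2 * s)]
    ring
  rw [intervalIntegral.integral_congr_ae (.of_forall hexpand), ← sum_sum_jacobiCoeff_stiffness,
    intervalIntegral.integral_finsetSum fun s _ => ?_]
  · refine sum_congr rfl fun s _ => ?_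
    rw [intervalIntegral.integral_finsetSum fun t _ => ?_]
    · refine sum_congr rfl fun t _ => ?_
      rw [intervalIntegral.integral_const_mul, integral_mul_pow_sub_one _ fun h => ?_]
      · push_cast; rfl
      · obtain rfl : k = 0 := by omega
        simp_all
    · exact Continuous.intervalIntegrable (by fun_prop) _ _
  · exact Continuous.intervalIntegrable (by fun_prop) _ _

/-- the stiffness matrix entries
A(m)_{n'n} = (1/π)∫₀^{2π}∫₀¹ conj(∇_H ζ_{mn'})·∇_H ζ_{mn} ρ dρ dθ equal
2 μ_{mn'} μ_{mn} [2γ(γ+|m|+1) + |m|] with γ = min(n',n). -/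
theorem zernike_stiffness_entries (m : ℤ) (n' n : ℕ) :
    (1 / (Real.pi : ℂ)) * ∫ θ in (0:ℝ)..(2 * Real.pi), ∫ ρ in (0:ℝ)..1,
        ((starRingEnd ℂ) (deriv (fun r => zernike m n' r θ) ρ)
            * deriv (fun r => zernike m n r θ) ρ
          + ((ρ : ℂ)⁻¹) ^ 2 * (starRingEnd ℂ) (deriv (fun t => zernike m n' ρ t) θ)
            * deriv (fun t => zernike m n ρ t) θ) * (ρ : ℂ)
      = ((2 * Real.sqrt (1 + m.natAbs + 2 * n') * Real.sqrt (1 + m.natAbs + 2 * n)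
          * (2 * (min n' n : ℕ) * ((min n' n : ℕ) + m.natAbs + 1) + m.natAbs) : ℝ) : ℂ) := by
  simp_rw [zernike_stiffness_integrand_eq, intervalIntegral.integral_ofReal,
    intervalIntegral.integral_const_mul, integral_zernikeRadial_stiffness,
    intervalIntegral.integral_const, sub_zero, smul_eq_mul]
  rw [one_div, inv_mul_eq_iff_eq_mul₀ (ofReal_ne_zero.mpr Real.pi_ne_zero)]
  push_cast
  ring
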